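/- arXiv:2202.12034 — 7 statements merged into one kernel-verified Lean document; each statement's English description precedes it below -/
import Mathlib

section
/- For every b ∈ B, the reach set R(b) is contained in B; that is, for every b′ ∈ ℤ^n with b_j − a(b)_j ≤ b′_j ≤ b_j − a(b)_j + a_{i(b)j} for all j, one has 0 ≤ b′_j < Σ_{i=0}^{n} a_{ij} for all j. -/
open Finset

/-- The partial sum `Σ_{k=0}^{i-1} a_{k j}` as an integer. -/
def psum (a : ℕ → ℕ → ℕ) (i j : ℕ) : ℤ := ∑ k ∈ Finset.range i, (a k j : ℤ)

/-- `b ∈ B`, i.e. `0 ≤ b_j < Σ_{i=0}^{n} a_{ij}` for all `j`. -/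
def memB (n : ℕ) (a : ℕ → ℕ → ℕ) (b : ℕ → ℤ) : Prop :=
  ∀ j < n, 0 ≤ b j ∧ b j < psum a (n + 1) j

/-- `φ` is the type function of `b`:
`Σ_{k=0}^{φ(j)-1} a_{kj} ≤ b_j < Σ_{k=0}^{φ(j)} a_{kj}` for all `j < n`. -/
def IsTypeFun (n : ℕ) (a : ℕ → ℕ → ℕ) (b : ℕ → ℤ) (φ : ℕ → ℕ) : Prop :=
  ∀ j < n, φ j ≤ n ∧ psum a (φ j) j ≤ b j ∧ b j < psum a (φ j + 1) j

/-- The type vector `t_{b,i} = #{j : φ_b(j) = i}`. -/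
def typeVec (n : ℕ) (φ : ℕ → ℕ) (i : ℕ) : ℕ :=
  ((Finset.range n).filter fun j => φ j = i).card

/-- `ib` is the row content of a point with type function `φ`:
the largest `i ∈ {0,…,n}` with `t_{b,i} = 0`. -/
def IsRowContent (n : ℕ) (φ : ℕ → ℕ) (ib : ℕ) : Prop :=
  ib ≤ n ∧ typeVec n φ ib = 0 ∧ ∀ i ≤ n, typeVec n φ i = 0 → i ≤ ib

/-- The vector `a(b)`: `a(b)_j = 0` if `φ_b(j) < i(b)` and `a(b)_j = a_{i(b) j}` otherwise. -/
def ashift (a : ℕ → ℕ → ℕ) (φ : ℕ → ℕ) (ib j : ℕ) : ℤ :=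
  if φ j < ib then 0 else (a ib j : ℤ)

/-- `b' ∈ R(b) = {b - a(b) + c : c ∈ A_{i(b)}}`. -/
def memR (n : ℕ) (a : ℕ → ℕ → ℕ) (b : ℕ → ℤ) (φ : ℕ → ℕ) (ib : ℕ) (b' : ℕ → ℤ) : Prop :=
  ∀ j < n, b j - ashift a φ ib j ≤ b' j ∧ b' j ≤ b j - ashift a φ ib j + (a ib j : ℤ)

/-- The greedy condition: `Σ_{i=0}^{I} t_{b,i} ≤ I + 1` for all `I < n`. -/
def memG (n : ℕ) (φ : ℕ → ℕ) : Prop :=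
  ∀ I < n, ∑ i ∈ Finset.range (I + 1), typeVec n φ i ≤ I + 1

/-- A point is mixed if `t_{b,i} ≤ 1` for all `i ∈ {0,…,n}`. -/
def Mixed (n : ℕ) (φ : ℕ → ℕ) : Prop := ∀ i ≤ n, typeVec n φ i ≤ 1

/-- `Ib = I_b`: for non-mixed `b` the largest `i` with `t_{b,i} ≥ 2`; for mixed `b`, `0`. -/
def IsIb (n : ℕ) (φ : ℕ → ℕ) (Ib : ℕ) : Prop :=
  (2 ≤ typeVec n φ Ib ∧ ∀ i, 2 ≤ typeVec n φ i → i ≤ Ib) ∨ (Mixed n φ ∧ Ib = 0)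

/-- `g_b = #{i < I_b : t_{b,i} = 0}`. -/
def gval (n : ℕ) (φ : ℕ → ℕ) (Ib : ℕ) : ℕ :=
  ((Finset.range Ib).filter fun i => typeVec n φ i = 0).card

theorem reach_subset_B
    (n : ℕ) (hn : 0 < n) (a : ℕ → ℕ → ℕ)
    (hpos : ∀ i ≤ n, ∀ j < n, 0 < a i j)
    (hord : ∀ j < n, ∀ i i' : ℕ, i ≤ i' → i' < n → a i j ≤ a i' j)
    (b : ℕ → ℤ) (hb : memB n a b)
    (φ : ℕ → ℕ) (hφ : IsTypeFun n a b φ)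
    (ib : ℕ) (hib : IsRowContent n φ ib)
    (b' : ℕ → ℤ) (hb' : memR n a b φ ib b') :
    memB n a b' := by
  -- auxiliary: a single term plus a prefix sum is at most a longer prefix sum
  have key : ∀ m k m' j, m ≤ k → k < m' →
      (a k j : ℤ) + psum a m j ≤ psum a m' j := by
    intro m k m' j hmk hkm'
    have hmm' : m ≤ m' := le_trans hmk (le_of_lt hkm')
    have hsplit : psum a m' j = psum a m j + ∑ i ∈ Finset.Ico m m', (a i j : ℤ) := by
      unfold psum
      rw [Finset.range_eq_Ico, ← Finset.sum_Ico_consecutive _ (Nat.zero_le m) hmm',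
        ← Finset.range_eq_Ico]
    have hk : (a k j : ℤ) ≤ ∑ i ∈ Finset.Ico m m', (a i j : ℤ) := by
      apply Finset.single_le_sum (f := fun i => (a i j : ℤ))
      · intro i _; positivity
      · exact Finset.mem_Ico.mpr ⟨hmk, hkm'⟩
    linarith
  intro j hj
  obtain ⟨hb0, hb1⟩ := hb j hj
  obtain ⟨hφn, hφ1, hφ2⟩ := hφ j hj
  obtain ⟨hibn, hib0, _⟩ := hib
  obtain ⟨hr1, hr2⟩ := hb' j hj
  have hne : φ j ≠ ib := by
    intro h
    have : j ∈ (Finset.range n).filter fun j => φ j = ib :=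
      Finset.mem_filter.mpr ⟨Finset.mem_range.mpr hj, h⟩
    have := Finset.card_pos.mpr ⟨j, this⟩
    unfold typeVec at hib0
    omega
  unfold ashift at hr1 hr2
  by_cases hlt : φ j < ib
  · rw [if_pos hlt] at hr1 hr2
    constructor
    · linarith
    · have := key (φ j + 1) ib (n + 1) j hlt (by omega)
      linarith
  · rw [if_neg hlt] at hr1 hr2
    have hgt : ib < φ j := by omega
    have := key 0 ib (φ j) j (Nat.zero_le _) hgt
    have hp0 : psum a 0 j = 0 := by simp [psum]
    constructor
    · linarith
    · have hmono : psum a (φ j + 1) j ≤ psum a (n + 1) j := by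
        unfold psum
        apply Finset.sum_le_sum_of_subset_of_nonneg
        · exact Finset.range_subset_range.mpr (by omega)
        · intro i _ _; positivity
      linarith
end

section
/- Let b ∈ B and b′ ∈ R(b) (so b′ ∈ B). Then for every j ∈ {1,…,n}: if i(b) < φ_b(j) then φ_{b′}(j) ∈ {φ_b(j) − 1, φ_b(j)}, and if i(b) > φ_b(j) then φ_b(j) ≤ φ_{b′}(j) ≤ i(b). -/
open Finset

lemma psum_mono (a : ℕ → ℕ → ℕ) (j : ℕ) {i i' : ℕ} (h : i ≤ i') :
    psum a i j ≤ psum a i' j := by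
  apply Finset.sum_le_sum_of_subset_of_nonneg (Finset.range_subset_range.2 h)
  intro k _ _; positivity

lemma lt_of_psum (a : ℕ → ℕ → ℕ) (j : ℕ) {i i' : ℕ} {x : ℤ}
    (h1 : psum a i j ≤ x) (h2 : x < psum a i' j) : i < i' := by
  by_contra h
  exact absurd (le_trans (psum_mono a j (not_lt.1 h)) h1) (not_le.2 h2)

lemma psum_succ (a : ℕ → ℕ → ℕ) (i j : ℕ) :
    psum a (i + 1) j = psum a i j + (a i j : ℤ) := Finset.sum_range_succ _ _

theorem typeFun_range_of_reach
    (n : ℕ) (hn : 0 < n) (a : ℕ → ℕ → ℕ)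
    (hpos : ∀ i ≤ n, ∀ j < n, 0 < a i j)
    (hord : ∀ j < n, ∀ i i' : ℕ, i ≤ i' → i' < n → a i j ≤ a i' j)
    (b : ℕ → ℤ) (hb : memB n a b)
    (φ : ℕ → ℕ) (hφ : IsTypeFun n a b φ)
    (ib : ℕ) (hib : IsRowContent n φ ib)
    (b' : ℕ → ℤ) (hb' : memR n a b φ ib b') (hb'B : memB n a b')
    (φ' : ℕ → ℕ) (hφ' : IsTypeFun n a b' φ') :
    ∀ j < n,
      (ib < φ j → (φ' j = φ j - 1 ∨ φ' j = φ j)) ∧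
      (φ j < ib → (φ j ≤ φ' j ∧ φ' j ≤ ib)) := by
  intro j hj
  obtain ⟨hφn, hφl, hφu⟩ := hφ j hj
  obtain ⟨hφ'n, hφ'l, hφ'u⟩ := hφ' j hj
  obtain ⟨hr1, hr2⟩ := hb' j hj
  constructor
  · intro hlt
    have hash : ashift a φ ib j = (a ib j : ℤ) := by
      unfold ashift; rw [if_neg (by omega)]
    rw [hash] at hr1 hr2
    have hord' : (a ib j : ℤ) ≤ (a (φ j - 1) j : ℤ) := by
      exact_mod_cast hord j hj ib (φ j - 1) (by omega) (by omega)
    have hps : psum a (φ j) j = psum a (φ j - 1) j + (a (φ j - 1) j : ℤ) := by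
      conv_lhs => rw [show φ j = (φ j - 1) + 1 from by omega]
      exact psum_succ _ _ _
    have hlow : psum a (φ j - 1) j ≤ b' j := by
      have := psum_mono a j (show φ j - 1 + 1 ≤ φ j by omega)
      omega
    have h1 := lt_of_psum a j hlow hφ'u
    have h2 := lt_of_psum a j hφ'l (show b' j < psum a (φ j + 1) j by omega)
    omega
  · intro hlt
    have hash : ashift a φ ib j = 0 := by
      unfold ashift; rw [if_pos hlt]
    rw [hash] at hr1 hr2
    have h1 := lt_of_psum a j hφl (show b j < psum a (φ' j + 1) j by omega)
    have hmono := psum_mono a j (show φ j + 1 ≤ ib by omega)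
    have hps : psum a (ib + 1) j = psum a ib j + (a ib j : ℤ) := psum_succ a ib j
    have h2 := lt_of_psum a j hφ'l (show b' j < psum a (ib + 1) j by omega)
    omega
end

section
/- Let b ∈ G and let b′ ∈ B with b′ ∉ G. Then b′ ∉ R(b). Equivalently, the greedy subset G is closed under the greedy algorithm: for b ∈ G, every element of R(b) belongs to G. -/
open Finset

lemma le_type {n : ℕ} {a : ℕ → ℕ → ℕ} {b' : ℕ → ℤ} {φ' : ℕ → ℕ}
    (hφ' : IsTypeFun n a b' φ') {j m : ℕ} (hj : j < n)
    (h : psum a m j ≤ b' j) : m ≤ φ' j := by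
  by_contra hc
  push_neg at hc
  have h1 := psum_mono a j (show φ' j + 1 ≤ m by omega)
  have h2 := (hφ' j hj).2.2
  linarith

lemma sum_typeVec (n m : ℕ) (φ : ℕ → ℕ) :
    ∑ i ∈ Finset.range m, typeVec n φ i
      = ((Finset.range n).filter fun j => φ j < m).card := by
  induction m with
  | zero => simp
  | succ m ih =>
    rw [Finset.sum_range_succ, ih]
    have hsplit : ((Finset.range n).filter fun j => φ j < m + 1)
        = ((Finset.range n).filter fun j => φ j < m)
          ∪ ((Finset.range n).filter fun j => φ j = m) := by
      ext j
      simp only [Finset.mem_filter, Finset.mem_union, Finset.mem_range]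
      omega
    rw [hsplit, Finset.card_union_of_disjoint]
    · rfl
    · rw [Finset.disjoint_left]
      intro x hx hx'
      simp only [Finset.mem_filter] at hx hx'
      omega


theorem greedy_closed
    (n : ℕ) (hn : 0 < n) (a : ℕ → ℕ → ℕ)
    (hpos : ∀ i ≤ n, ∀ j < n, 0 < a i j)
    (hord : ∀ j < n, ∀ i i' : ℕ, i ≤ i' → i' < n → a i j ≤ a i' j)
    (b : ℕ → ℤ) (hb : memB n a b)
    (φ : ℕ → ℕ) (hφ : IsTypeFun n a b φ)
    (hG : memG n φ)
    (ib : ℕ) (hib : IsRowContent n φ ib)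
    (b' : ℕ → ℤ) (hb'B : memB n a b')
    (φ' : ℕ → ℕ) (hφ' : IsTypeFun n a b' φ')
    (hnG : ¬ memG n φ') :
    ¬ memR n a b φ ib b' := by
  intro hR
  apply hnG
  -- `φ j` never equals `ib`
  have hneq : ∀ j < n, φ j ≠ ib := by
    intro j hj h
    have h0 : typeVec n φ ib = 0 := hib.2.1
    unfold typeVec at h0
    have hmem : j ∈ (Finset.range n).filter fun j => φ j = ib := by
      simp [Finset.mem_filter, hj, h]
    rw [Finset.card_eq_zero.mp h0] at hmem
    exact absurd hmem (Finset.notMem_empty j)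
  -- key per-coordinate comparison of `φ'` with `φ`
  have key : ∀ j, j < n → φ j ≤ φ' j + 1 ∧ (φ j < ib → φ j ≤ φ' j) ∧
      (ib < φ j → ib ≤ φ' j) := by
    intro j hj
    obtain ⟨hφn, hφ1, hφ2⟩ := hφ j hj
    obtain ⟨hR1, hR2⟩ := hR j hj
    rcases lt_or_gt_of_ne (hneq j hj) with hlt | hgt
    · -- φ j < ib : ashift is 0
      have hsh : ashift a φ ib j = 0 := if_pos hlt
      rw [hsh] at hR1 hR2
      have h1 : psum a (φ j) j ≤ b' j := by linarith
      have hle : φ j ≤ φ' j := le_type hφ' hj h1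
      exact ⟨by omega, fun _ => hle, fun h => by omega⟩
    · -- ib < φ j : ashift is a ib j
      have hsh : ashift a φ ib j = (a ib j : ℤ) := if_neg (by omega)
      rw [hsh] at hR1 hR2
      have h1 : psum a ib j ≤ b' j := by
        have hm : psum a (ib + 1) j ≤ psum a (φ j) j := psum_mono a j hgt
        have hs := psum_succ a ib j
        linarith
      have hib' : ib ≤ φ' j := le_type hφ' hj h1
      have h2 : psum a (φ j - 1) j ≤ b' j := by
        have hlt_n : φ j - 1 < n := by omega
        have hord' : (a ib j : ℤ) ≤ (a (φ j - 1) j : ℤ) := by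
          exact_mod_cast hord j hj ib (φ j - 1) (by omega) hlt_n
        have hs := psum_succ a (φ j - 1) j
        have heq : φ j - 1 + 1 = φ j := by omega
        rw [heq] at hs
        linarith
      have h3 : φ j - 1 ≤ φ' j := le_type hφ' hj h2
      exact ⟨by omega, fun h => by omega, fun _ => hib'⟩
  -- now prove the greedy condition for φ'
  intro I hI
  rw [sum_typeVec]
  rcases lt_or_ge I ib with hcase | hcase
  · -- I < ib : compare with greedy condition of b
    have sub : ((Finset.range n).filter fun j => φ' j < I + 1)
        ⊆ ((Finset.range n).filter fun j => φ j < I + 1) := by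
      intro j hjm
      simp only [Finset.mem_filter, Finset.mem_range] at hjm ⊢
      obtain ⟨k1, k2, k3⟩ := key j hjm.1
      refine ⟨hjm.1, ?_⟩
      rcases lt_or_gt_of_ne (hneq j hjm.1) with h | h
      · have := k2 h; omega
      · have := k3 h; omega
    have hGb := hG I hI
    rw [sum_typeVec] at hGb
    exact le_trans (Finset.card_le_card sub) hGb
  · -- ib ≤ I : every row above I+1 is occupied for b
    have sub : ((Finset.range n).filter fun j => φ' j < I + 1)
        ⊆ ((Finset.range n).filter fun j => φ j < I + 2) := by
      intro j hjm
      simp only [Finset.mem_filter, Finset.mem_range] at hjm ⊢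
      obtain ⟨k1, _, _⟩ := key j hjm.1
      exact ⟨hjm.1, by omega⟩
    have hsurj : Set.SurjOn φ
        ↑((Finset.range n).filter fun j => ¬ φ j < I + 2)
        ↑(Finset.Icc (I + 2) n) := by
      intro i hi
      simp only [Finset.coe_Icc, Set.mem_Icc] at hi
      have hti : typeVec n φ i ≠ 0 := by
        intro h0
        have := hib.2.2 i hi.2 h0
        omega
      have hne : ((Finset.range n).filter fun j => φ j = i).Nonempty := by
        rw [← Finset.card_pos]
        unfold typeVec at hti
        omega
      obtain ⟨j, hjm⟩ := hne
      simp only [Finset.mem_filter, Finset.mem_range] at hjm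
      refine ⟨j, ?_, hjm.2⟩
      simp only [Finset.coe_filter, Set.mem_setOf_eq, Finset.mem_range]
      exact ⟨hjm.1, by omega⟩
    have hcard1 := Finset.card_le_card_of_surjOn φ hsurj
    have hcard2 := Finset.card_filter_add_card_filter_not
      (s := Finset.range n) (p := fun j => φ j < I + 2)
    rw [Finset.card_range] at hcard2
    have hIcc : (Finset.Icc (I + 2) n).card = n + 1 - (I + 2) := Nat.card_Icc _ _
    have hsubc := Finset.card_le_card sub
    omega
end

section
/- The cardinality of the greedy subset G equals Σ_φ Π_{j=1}^{n} a_{φ(j)j}, where the sum runs over all functions φ : {1,…,n} → {0,…,n} satisfying #φ^{−1}({0,…,I}) ≤ I + 1 for every I with 0 ≤ I < n. -/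
open Finset

/-- The type function of a lattice point `b`: `typeOf a b j` is the unique `i`
with `Σ_{k=0}^{i-1} a_{kj} ≤ b_j < Σ_{k=0}^{i} a_{kj}` (defined as the least `i`
with `b_j < Σ_{k=0}^{i} a_{kj}`). -/
noncomputable def typeOf (a : ℕ → ℕ → ℕ) {n : ℕ} (b : Fin n → ℤ) (j : Fin n) : ℕ :=
  sInf {i : ℕ | b j < psum a (i + 1) (j : ℕ)}

/-! A point `b` of the box `B` lies in exactly one product of half-open intervals
`∏ⱼ [Σ_{k<φ j} a_{kj}, Σ_{k≤φ j} a_{kj})`, namely the one indexed by its type function `φ = φ_b`,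
and that product has `∏ⱼ a_{φ(j) j}` lattice points. Greediness of `b` depends only on `φ_b`, so `G`
is the disjoint union of the products indexed by the admissible `φ`. -/

lemma psum_mono_s7 (a : ℕ → ℕ → ℕ) (j : ℕ) : Monotone fun i => psum a i j := fun _ _ h =>
  sum_le_sum_of_subset_of_nonneg (range_subset_range.2 h) fun _ _ _ => Int.natCast_nonneg _

lemma psum_succ_sub (a : ℕ → ℕ → ℕ) (i j : ℕ) : psum a (i + 1) j - psum a i j = a i j := by
  simp [psum, sum_range_succ]

section typeOf

variable (a : ℕ → ℕ → ℕ) {n : ℕ} (b : Fin n → ℤ) (j : Fin n)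

lemma typeOf_eq_of_mem_Ico {i : ℕ} (h : b j ∈ Ico (psum a i j) (psum a (i + 1) j)) :
    typeOf a b j = i := by
  rw [mem_Ico] at h
  refine le_antisymm (Nat.sInf_le h.2) (le_csInf ⟨i, h.2⟩ fun i' hi' => ?_)
  by_contra! hlt
  have := psum_mono_s7 a j (Nat.succ_le_of_lt hlt)
  exact absurd (hi'.trans_le this) (not_lt.2 h.1)

lemma mem_Ico_typeOf (h0 : 0 ≤ b j) {m : ℕ} (hm : b j < psum a (m + 1) j) :
    b j ∈ Ico (psum a (typeOf a b j) j) (psum a (typeOf a b j + 1) j) := by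
  refine mem_Ico.2 ⟨?_, Nat.sInf_mem (s := {i | b j < psum a (i + 1) j}) ⟨m, hm⟩⟩
  cases hk : typeOf a b j with
  | zero => simpa [psum] using h0
  | succ k =>
    have : k ∉ {i : ℕ | b j < psum a (i + 1) j} :=
      Nat.notMem_of_lt_sInf (show k < typeOf a b j by omega)
    simpa using this

end typeOf

noncomputable def typeBox (a : ℕ → ℕ → ℕ) {n m : ℕ} (φ : Fin n → Fin m) : Finset (Fin n → ℤ) :=
  Fintype.piFinset fun j => Ico (psum a (φ j) j) (psum a (φ j + 1) j)

section typeBox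

variable (a : ℕ → ℕ → ℕ) {n m : ℕ}

lemma typeOf_of_mem_typeBox {φ : Fin n → Fin m} {b : Fin n → ℤ} (hb : b ∈ typeBox a φ)
    (j : Fin n) : typeOf a b j = φ j :=
  typeOf_eq_of_mem_Ico a b j (Fintype.mem_piFinset.1 hb j)

lemma card_typeBox (φ : Fin n → Fin m) : #(typeBox a φ) = ∏ j, a (φ j) j := by
  simp only [typeBox, Fintype.card_piFinset, Int.card_Ico, psum_succ_sub, Int.toNat_natCast]

lemma ncard_typeOf_le_of_mem_typeBox {φ : Fin n → Fin m} {b : Fin n → ℤ}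
    (hb : b ∈ typeBox a φ) (I : ℕ) : {j | typeOf a b j ≤ I}.ncard = #{j | (φ j : ℕ) ≤ I} := by
  simp [Set.ncard_eq_toFinset_card', typeOf_of_mem_typeBox a hb]

lemma pairwiseDisjoint_typeBox : (Set.univ : Set (Fin n → Fin m)).PairwiseDisjoint (typeBox a) :=
  fun _ _ _ _ hne => disjoint_left.2 fun _ hφ hψ => hne <| funext fun j =>
    Fin.ext <| (typeOf_of_mem_typeBox a hφ j).symm.trans (typeOf_of_mem_typeBox a hψ j)

lemma exists_mem_typeBox_iff (b : Fin n → ℤ) :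
    (∃ φ : Fin n → Fin (n + 1), b ∈ typeBox a φ) ↔
      ∀ j : Fin n, 0 ≤ b j ∧ b j < psum a (n + 1) j := by
  constructor
  · rintro ⟨φ, hb⟩ j
    have hj := mem_Ico.1 (Fintype.mem_piFinset.1 hb j)
    exact ⟨(Finset.sum_nonneg fun _ _ => Int.natCast_nonneg _).trans hj.1,
      hj.2.trans_le (psum_mono_s7 a j (φ j).isLt)⟩
  · intro hb
    refine ⟨fun j => ⟨typeOf a b j, Nat.lt_succ_of_le (Nat.sInf_le (hb j).2)⟩, ?_⟩
    exact Fintype.mem_piFinset.2 fun j => mem_Ico_typeOf a b j (hb j).1 (hb j).2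

end typeBox

open scoped Classical in
theorem card_greedy_subset_general
    (n : ℕ) (a : ℕ → ℕ → ℕ) :
    Set.ncard {b : Fin n → ℤ |
        (∀ j : Fin n, 0 ≤ b j ∧ b j < psum a (n + 1) (j : ℕ)) ∧
        ∀ I < n, Set.ncard {j : Fin n | typeOf a b j ≤ I} ≤ I + 1} =
      ∑ φ ∈ Finset.univ.filter
          (fun φ : Fin n → Fin (n + 1) =>
            ∀ I < n, (Finset.univ.filter fun j : Fin n => (φ j : ℕ) ≤ I).card ≤ I + 1),
        ∏ j : Fin n, a (φ j) (j : ℕ) := by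
  set admissible := Finset.univ.filter fun φ : Fin n → Fin (n + 1) =>
    ∀ I < n, (Finset.univ.filter fun j : Fin n => (φ j : ℕ) ≤ I).card ≤ I + 1
  have hG : {b : Fin n → ℤ |
        (∀ j : Fin n, 0 ≤ b j ∧ b j < psum a (n + 1) (j : ℕ)) ∧
        ∀ I < n, Set.ncard {j : Fin n | typeOf a b j ≤ I} ≤ I + 1} =
      ↑(admissible.biUnion (typeBox a)) := by
    ext b
    simp only [Set.mem_ofPred_eq, coe_biUnion, mem_coe, Set.mem_iUnion, exists_prop,
      ← exists_mem_typeBox_iff, admissible, mem_filter, mem_univ, true_and]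
    constructor
    · rintro ⟨⟨φ, hb⟩, hcard⟩
      exact ⟨φ, fun I hI => ncard_typeOf_le_of_mem_typeBox a hb I ▸ hcard I hI, hb⟩
    · rintro ⟨φ, hφ, hb⟩
      exact ⟨⟨φ, hb⟩, fun I hI => (ncard_typeOf_le_of_mem_typeBox a hb I).symm ▸ hφ I hI⟩
  rw [hG, Set.ncard_coe_finset,
    card_biUnion ((pairwiseDisjoint_typeBox a).subset (Set.subset_univ _))]
  exact sum_congr rfl fun φ _ => card_typeBox a φ

open scoped Classical in
/-- The cardinality of the greedy subset `G` equals
`Σ_φ Π_j a_{φ(j) j}`, the sum running over all `φ : {1,…,n} → {0,…,n}` with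
`#φ⁻¹({0,…,I}) ≤ I + 1` for every `I < n`. -/
theorem card_greedy_subset
    (n : ℕ) (hn : 0 < n) (a : ℕ → ℕ → ℕ)
    (hpos : ∀ i ≤ n, ∀ j < n, 0 < a i j)
    (hord : ∀ j < n, ∀ i i' : ℕ, i ≤ i' → i' < n → a i j ≤ a i' j) :
    Set.ncard {b : Fin n → ℤ |
        (∀ j : Fin n, 0 ≤ b j ∧ b j < psum a (n + 1) (j : ℕ)) ∧
        ∀ I < n, Set.ncard {j : Fin n | typeOf a b j ≤ I} ≤ I + 1} =
      ∑ φ ∈ Finset.univ.filter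
          (fun φ : Fin n → Fin (n + 1) =>
            ∀ I < n, (Finset.univ.filter fun j : Fin n => (φ j : ℕ) ≤ I).card ≤ I + 1),
        ∏ j : Fin n, a (φ j) (j : ℕ) :=
  card_greedy_subset_general n a
end

section
/- Let b ∈ G and let I < n be such that Σ_{i=0}^{I} t_{b,i} = I + 1. Then the row content satisfies i(b) > I; in particular there exists i > I with t_{b,i} = 0. -/
open Finset

/-! Every column has a type in `{0,…,n}`, so the `n + 1` entries of the type vector sum to `n`.
If the first `I + 1` of them already sum to `I + 1`, the remaining `n - I` entries sum to
`n - I - 1`, so one of them vanishes; the row content, being the largest vanishing index, is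
then beyond `I`. -/

theorem Finset.exists_eq_zero_of_sum_lt_card {ι : Type*} (s : Finset ι) (f : ι → ℕ)
    (h : ∑ i ∈ s, f i < #s) : ∃ i ∈ s, f i = 0 := by
  obtain ⟨i, hi, hlt⟩ := exists_lt_of_sum_lt (g := fun _ => 1) (by simpa using h)
  exact ⟨i, hi, Nat.lt_one_iff.mp hlt⟩

theorem sum_typeVec_range_eq {n m : ℕ} {φ : ℕ → ℕ} (hφ : ∀ j < n, φ j < m) :
    ∑ i ∈ range m, typeVec n φ i = n := by
  simpa [typeVec] using
    (card_eq_sum_card_fiberwise (s := range n) (t := range m) fun j hj =>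
      mem_range.mpr (hφ j (mem_range.mp hj))).symm

theorem sum_typeVec_range_of_isTypeFun {n : ℕ} {a : ℕ → ℕ → ℕ} {b : ℕ → ℤ} {φ : ℕ → ℕ}
    (hφ : IsTypeFun n a b φ) : ∑ i ∈ range (n + 1), typeVec n φ i = n :=
  sum_typeVec_range_eq fun j hj => Nat.lt_succ_of_le (hφ j hj).1

theorem exists_typeVec_eq_zero_of_partial_sum_eq {n : ℕ} {a : ℕ → ℕ → ℕ} {b : ℕ → ℤ}
    {φ : ℕ → ℕ} (hφ : IsTypeFun n a b φ) {I : ℕ} (hI : I < n)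
    (hsum : ∑ i ∈ range (I + 1), typeVec n φ i = I + 1) :
    ∃ i, I < i ∧ i ≤ n ∧ typeVec n φ i = 0 := by
  have htail : ∑ i ∈ Ico (I + 1) (n + 1), typeVec n φ i < #(Ico (I + 1) (n + 1)) := by
    have hsplit := sum_range_add_sum_Ico (typeVec n φ) (show I + 1 ≤ n + 1 by omega)
    rw [sum_typeVec_range_of_isTypeFun hφ, hsum] at hsplit
    rw [Nat.card_Ico]
    omega
  obtain ⟨i, hi, hzero⟩ := exists_eq_zero_of_sum_lt_card _ _ htail
  rw [mem_Ico] at hi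
  exact ⟨i, by omega, by omega, hzero⟩

theorem rowContent_gt_of_partial_sum_eq_general
    (n : ℕ) (a : ℕ → ℕ → ℕ)
    (b : ℕ → ℤ)
    (φ : ℕ → ℕ) (hφ : IsTypeFun n a b φ)
    (I : ℕ) (hI : I < n)
    (hsum : ∑ i ∈ Finset.range (I + 1), typeVec n φ i = I + 1)
    (ib : ℕ) (hib : IsRowContent n φ ib) :
    I < ib ∧ ∃ i, I < i ∧ i ≤ n ∧ typeVec n φ i = 0 := by
  obtain ⟨i, hIi, hin, hzero⟩ := exists_typeVec_eq_zero_of_partial_sum_eq hφ hI hsum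
  exact ⟨hIi.trans_le (hib.2.2 i hin hzero), i, hIi, hin, hzero⟩

theorem rowContent_gt_of_partial_sum_eq
    (n : ℕ) (hn : 0 < n) (a : ℕ → ℕ → ℕ)
    (hpos : ∀ i ≤ n, ∀ j < n, 0 < a i j)
    (hord : ∀ j < n, ∀ i i' : ℕ, i ≤ i' → i' < n → a i j ≤ a i' j)
    (b : ℕ → ℤ) (hb : memB n a b)
    (φ : ℕ → ℕ) (hφ : IsTypeFun n a b φ)
    (hG : memG n φ)
    (I : ℕ) (hI : I < n)
    (hsum : ∑ i ∈ Finset.range (I + 1), typeVec n φ i = I + 1)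
    (ib : ℕ) (hib : IsRowContent n φ ib) :
    I < ib ∧ ∃ i, I < i ∧ i ≤ n ∧ typeVec n φ i = 0 :=
  rowContent_gt_of_partial_sum_eq_general n a b φ hφ I hI hsum ib hib
end

section
/- Let b ∈ B and let I ∈ {0,…,n} with I < i(b). Then for every b′ ∈ R(b) one has Σ_{i=0}^{I} t_{b′,i} ≤ Σ_{i=0}^{I} t_{b,i}; that is, when the row content exceeds I, the partial sums of the type vector up to I cannot grow along the greedy algorithm. -/
open Finset

lemma sum_typeVec_eq (n I : ℕ) (φ : ℕ → ℕ) :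
    ∑ i ∈ Finset.range (I + 1), typeVec n φ i
      = ((Finset.range n).filter fun j => φ j ≤ I).card := by
  rw [Finset.card_eq_sum_card_fiberwise (f := φ) (t := Finset.range (I + 1))
    (fun x hx => Finset.mem_range.2 (Nat.lt_succ_of_le (Finset.mem_filter.1 hx).2))]
  apply Finset.sum_congr rfl
  intro i hi
  unfold typeVec
  congr 1
  rw [Finset.filter_filter]
  apply Finset.filter_congr
  intro j _
  constructor
  · intro h; exact ⟨h ▸ Nat.lt_succ_iff.1 (Finset.mem_range.1 hi), h⟩
  · intro h; exact h.2

theorem partial_sums_not_growing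
    (n : ℕ) (hn : 0 < n) (a : ℕ → ℕ → ℕ)
    (hpos : ∀ i ≤ n, ∀ j < n, 0 < a i j)
    (hord : ∀ j < n, ∀ i i' : ℕ, i ≤ i' → i' < n → a i j ≤ a i' j)
    (b : ℕ → ℤ) (hb : memB n a b)
    (φ : ℕ → ℕ) (hφ : IsTypeFun n a b φ)
    (ib : ℕ) (hib : IsRowContent n φ ib)
    (I : ℕ) (hI : I ≤ n) (hIib : I < ib)
    (b' : ℕ → ℤ) (hb' : memR n a b φ ib b') (hb'B : memB n a b')
    (φ' : ℕ → ℕ) (hφ' : IsTypeFun n a b' φ') :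
    ∑ i ∈ Finset.range (I + 1), typeVec n φ' i ≤ ∑ i ∈ Finset.range (I + 1), typeVec n φ i := by
  rw [sum_typeVec_eq, sum_typeVec_eq]
  apply Finset.card_le_card
  intro j hj
  rw [Finset.mem_filter] at hj ⊢
  obtain ⟨hjn, hφ'I⟩ := hj
  have hjn' := Finset.mem_range.1 hjn
  refine ⟨hjn, ?_⟩
  by_contra hgt
  push_neg at hgt
  -- φ j ≥ I + 1
  have hI1 : I + 1 ≤ φ j := hgt
  obtain ⟨hφn, hlo, hhi⟩ := hφ j hjn'
  obtain ⟨hφ'n, hlo', hhi'⟩ := hφ' j hjn'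
  obtain ⟨hRlo, hRhi⟩ := hb' j hjn'
  -- key: psum a (φ' j + 1) j ≤ b' j, contradiction with hhi'
  have hkey : psum a (φ' j + 1) j ≤ b' j := by
    by_cases hcase : φ j < ib
    · -- ashift = 0, b' j ≥ b j ≥ psum (φ j) ≥ psum (φ' j + 1)
      have : ashift a φ ib j = 0 := if_pos hcase
      have hb'ge : b j ≤ b' j := by rw [this] at hRlo; linarith
      calc psum a (φ' j + 1) j ≤ psum a (φ j) j :=
            psum_mono a j (Nat.succ_le_of_lt (lt_of_le_of_lt hφ'I hgt))
        _ ≤ b j := hlo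
        _ ≤ b' j := hb'ge
    · -- φ j ≥ ib, and φ j ≠ ib since typeVec n φ ib = 0
      have hne : φ j ≠ ib := by
        intro h
        have : j ∈ (Finset.range n).filter fun j => φ j = ib :=
          Finset.mem_filter.2 ⟨Finset.mem_range.2 hjn', h⟩
        have hzero := hib.2.1
        unfold typeVec at hzero
        rw [Finset.card_eq_zero] at hzero
        rw [hzero] at this
        exact absurd this (Finset.notMem_empty j)
      have hge : ib + 1 ≤ φ j := by omega
      have : ashift a φ ib j = (a ib j : ℤ) := if_neg hcase
      have hb'ge : b j - (a ib j : ℤ) ≤ b' j := by rw [this] at hRlo; linarith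
      have h1 : psum a (ib + 1) j ≤ psum a (φ j) j := psum_mono a j hge
      have h2 : psum a (ib + 1) j = psum a ib j + (a ib j : ℤ) := by
        unfold psum; rw [Finset.sum_range_succ]
      have h3 : psum a (φ' j + 1) j ≤ psum a ib j :=
        psum_mono a j (by omega)
      linarith
  linarith
end

section
/- Let b ∈ G be non-mixed, i.e., t_{b,i} ≥ 2 for some i. Then the type vector of b has at most one zero after I_b: #{i ∈ {0,…,n} : i > I_b and t_{b,i} = 0} ≤ 1. -/
open Finset

/-!
All `n` columns have a type in `{0,…,n}`, so the type vector sums to `n`. The greedy condition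
at `I_b` leaves at least `n - I_b - 1` for the `n - I_b` entries after `I_b`, and each of these
is at most `1` by maximality of `I_b` (or because `b` is mixed); hence at most one of them vanishes.
-/

theorem Finset.card_filter_eq_zero_le_one {ι : Type*} {s : Finset ι} {f : ι → ℕ}
    (hf : ∀ i ∈ s, f i ≤ 1) (hsum : #s ≤ ∑ i ∈ s, f i + 1) :
    #(s.filter (f · = 0)) ≤ 1 := by
  have hnonzero : ∑ i ∈ s, f i ≤ #(s.filter (f · ≠ 0)) :=
    calc ∑ i ∈ s, f i = ∑ i ∈ s.filter (f · ≠ 0), f i := (sum_filter_ne_zero s).symm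
      _ ≤ ∑ _i ∈ s.filter (f · ≠ 0), 1 :=
        sum_le_sum fun i hi => hf i (mem_filter.1 hi).1
      _ = #(s.filter (f · ≠ 0)) := by rw [sum_const, smul_eq_mul, mul_one]
  have hsplit : #(s.filter (f · = 0)) + #(s.filter (f · ≠ 0)) = #s :=
    card_filter_add_card_filter_not _
  omega

theorem sum_typeVec_range {n : ℕ} {φ : ℕ → ℕ} (hφ : ∀ j < n, φ j ≤ n) :
    ∑ i ∈ range (n + 1), typeVec n φ i = n := by
  have hmaps : ∀ j ∈ range n, φ j ∈ range (n + 1) := fun j hj =>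
    mem_range.2 (Nat.lt_succ_of_le (hφ j (mem_range.1 hj)))
  simpa [typeVec] using (card_eq_sum_card_fiberwise hmaps).symm

theorem memG.card_Ico_le_sum_typeVec {n : ℕ} {φ : ℕ → ℕ} (hG : memG n φ)
    (hφ : ∀ j < n, φ j ≤ n) (I : ℕ) :
    #(Ico (I + 1) (n + 1)) ≤ ∑ i ∈ Ico (I + 1) (n + 1), typeVec n φ i + 1 := by
  rw [Nat.card_Ico]
  rcases le_or_gt n I with hnI | hIn
  · omega
  have htotal := sum_typeVec_range hφ
  rw [← sum_range_add_sum_Ico _ (by omega : I + 1 ≤ n + 1)] at htotal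
  have hhead := hG I hIn
  omega

theorem IsIb.typeVec_le_one {n : ℕ} {φ : ℕ → ℕ} {Ib : ℕ} (hIb : IsIb n φ Ib) {i : ℕ}
    (hi : Ib < i) (hin : i ≤ n) : typeVec n φ i ≤ 1 := by
  rcases hIb with ⟨-, hmax⟩ | ⟨hmixed, -⟩
  · by_contra! h
    exact absurd (hmax i h) (by omega)
  · exact hmixed i hin

theorem at_most_one_zero_after_Ib_general
    (n : ℕ) (a : ℕ → ℕ → ℕ)
    (b : ℕ → ℤ)
    (φ : ℕ → ℕ) (hφ : IsTypeFun n a b φ)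
    (hG : memG n φ)
    (Ib : ℕ) (hIb : IsIb n φ Ib) :
    ((Finset.range (n + 1)).filter fun i => Ib < i ∧ typeVec n φ i = 0).card ≤ 1 := by
  have htail : ((range (n + 1)).filter fun i => Ib < i ∧ typeVec n φ i = 0)
      = (Ico (Ib + 1) (n + 1)).filter (typeVec n φ · = 0) := by
    ext i
    simp only [mem_filter, mem_range, mem_Ico]
    omega
  rw [htail]
  refine card_filter_eq_zero_le_one (fun i hi => ?_)
    (hG.card_Ico_le_sum_typeVec (fun j hj => (hφ j hj).1) Ib)
  rw [mem_Ico] at hi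
  exact hIb.typeVec_le_one (by omega) (by omega)

theorem at_most_one_zero_after_Ib
    (n : ℕ) (hn : 0 < n) (a : ℕ → ℕ → ℕ)
    (hpos : ∀ i ≤ n, ∀ j < n, 0 < a i j)
    (hord : ∀ j < n, ∀ i i' : ℕ, i ≤ i' → i' < n → a i j ≤ a i' j)
    (b : ℕ → ℤ) (hb : memB n a b)
    (φ : ℕ → ℕ) (hφ : IsTypeFun n a b φ)
    (hG : memG n φ)
    (hnm : ∃ i ≤ n, 2 ≤ typeVec n φ i)
    (Ib : ℕ) (hIb : IsIb n φ Ib) :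
    ((Finset.range (n + 1)).filter fun i => Ib < i ∧ typeVec n φ i = 0).card ≤ 1 :=
  at_most_one_zero_after_Ib_general n a b φ hφ hG Ib hIb
end
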